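/- Let φ : ℝ → ℝ be a measurable odd function with 0 ≤ φ(x) ≤ 1 for x > 0, φ(x) = 1 for 0 < x ≤ 1, and φ(x) = 0 for x ≥ 2. Then for every z ∈ ℍ with |z| ≥ 3: |G_φ(z)| ≤ 4/|z|², where G_φ(z) = (1/(πi))∫_ℝ φ(t)/(z − t) dt. -/

import Mathlib

open MeasureTheory Real Complex Filter
open scoped Topology

noncomputable section

/-- `G_ψ(z) = (1/(πi)) ∫_ℝ ψ(t)/(z - t) dt`, the analytic extension `ψ + iHψ`
of an integrable `ψ : ℝ → ℝ` to the upper half-plane. -/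
noncomputable def UHG (ψ : ℝ → ℝ) (z : ℂ) : ℂ :=
  ((Real.pi : ℂ) * Complex.I)⁻¹ • ∫ t : ℝ, ((ψ t : ℂ) / (z - (t : ℂ)))

/-- The hypotheses on the bump function `φ`: measurable, odd, `0 ≤ φ ≤ 1` on `(0,∞)`,
`φ = 1` on `(0,1]` and `φ = 0` on `[2,∞)`. -/
def IsPhi (φ : ℝ → ℝ) : Prop :=
  Measurable φ ∧ (∀ x : ℝ, φ (-x) = - φ x) ∧ (∀ x : ℝ, 0 < x → 0 ≤ φ x ∧ φ x ≤ 1) ∧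
    (∀ x : ℝ, 0 < x → x ≤ 1 → φ x = 1) ∧ (∀ x : ℝ, 2 ≤ x → φ x = 0)

/-!
Since `φ` is odd, pairing `t` with `-t` turns the Cauchy kernel `1/(z - t)` into
`t/(z² - t²)`, which is `O(|t|/|z|²)` on the support `[-2, 2]` of `φ`. Hence
`|G_φ(z)| ≤ (1/π) ∫_{-2}^{2} |t| dt / (|z|² - 4) = 4/(π(|z|² - 4))`, and this is at most
`4/|z|²` once `|z|² ≥ 9`.
-/

namespace IsPhi

variable {φ : ℝ → ℝ} (hφ : IsPhi φ)
include hφ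

lemma odd (x : ℝ) : φ (-x) = -φ x := hφ.2.1 x

lemma abs_le_one (x : ℝ) : |φ x| ≤ 1 := by
  obtain ⟨-, hodd, hbd, -, -⟩ := hφ
  rcases lt_trichotomy x 0 with hx | rfl | hx
  · rw [← neg_neg x, hodd, abs_neg, abs_of_nonneg (hbd _ (neg_pos.2 hx)).1]
    exact (hbd _ (neg_pos.2 hx)).2
  · have h0 := hodd 0
    rw [neg_zero] at h0
    rw [show φ 0 = 0 by linarith, abs_zero]
    exact zero_le_one
  · rw [abs_of_nonneg (hbd x hx).1]
    exact (hbd x hx).2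

lemma support_subset : Function.support φ ⊆ Set.Icc (-2) 2 := by
  intro x hx
  by_contra hmem
  rcases not_and_or.1 (Set.mem_Icc.not.1 hmem) with h | h
  · exact hx (by rw [← neg_neg x, hφ.odd, hφ.2.2.2.2 (-x) (by linarith), neg_zero])
  · exact hx (hφ.2.2.2.2 x (by linarith))

lemma integrable : Integrable φ :=
  (integrableOn_iff_integrable_of_support_subset hφ.support_subset).1 <|
    Measure.integrableOn_of_bounded measure_Icc_lt_top.ne hφ.1.aestronglyMeasurable
      (ae_of_all _ fun x => by simpa only [Real.norm_eq_abs] using hφ.abs_le_one x)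

end IsPhi

lemma norm_UHG (ψ : ℝ → ℝ) (z : ℂ) :
    ‖UHG ψ z‖ = π⁻¹ * ‖∫ t : ℝ, (ψ t : ℂ) / (z - t)‖ := by
  rw [UHG, norm_smul, norm_inv, norm_mul, Complex.norm_I, Complex.norm_real, Real.norm_eq_abs,
    abs_of_pos Real.pi_pos, mul_one]

lemma Complex.sub_ofReal_ne_zero {z : ℂ} (hz : z.im ≠ 0) (t : ℝ) : z - t ≠ 0 := fun h =>
  hz (by simpa using congrArg Complex.im h)

lemma Complex.abs_im_le_norm_sub_ofReal (z : ℂ) (t : ℝ) : |z.im| ≤ ‖z - t‖ := by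
  simpa using Complex.abs_im_le_norm (z - t)

lemma integrable_div_sub {ψ : ℝ → ℝ} (hψ : Integrable ψ) {z : ℂ} (hz : z.im ≠ 0) :
    Integrable fun t : ℝ => (ψ t : ℂ) / (z - t) := by
  simp_rw [div_eq_mul_inv]
  refine hψ.ofReal.mul_bdd (c := |z.im|⁻¹) ?_ (ae_of_all _ fun t => ?_)
  · exact ((continuous_const.sub continuous_ofReal).inv₀
      (Complex.sub_ofReal_ne_zero hz)).aestronglyMeasurable
  · rw [norm_inv]
    exact inv_anti₀ (abs_pos.2 hz) (Complex.abs_im_le_norm_sub_ofReal z t)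

theorem integral_div_sub_of_odd {ψ : ℝ → ℝ} (hodd : ∀ x, ψ (-x) = -ψ x) (hψ : Integrable ψ)
    {z : ℂ} (hz : z.im ≠ 0) :
    ∫ t : ℝ, (ψ t : ℂ) / (z - t) = ∫ t : ℝ, t * ψ t / (z ^ 2 - t ^ 2) := by
  set f := fun t : ℝ => (ψ t : ℂ) / (z - t)
  have hf : Integrable f := integrable_div_sub hψ hz
  have hpair (t : ℝ) : f t + f (-t) = 2 * (t * ψ t / (z ^ 2 - t ^ 2)) := by
    have h₁ := Complex.sub_ofReal_ne_zero hz t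
    have h₂ : z + t ≠ 0 := by simpa using Complex.sub_ofReal_ne_zero hz (-t)
    have h₃ : z ^ 2 - (t : ℂ) ^ 2 ≠ 0 := by
      rw [sq_sub_sq]
      exact mul_ne_zero h₂ h₁
    simp only [f, hodd, ofReal_neg, sub_neg_eq_add]
    field_simp
    ring
  calc ∫ t, f t = ((∫ t, f t) + ∫ t, f (-t)) / 2 := by rw [integral_neg_eq_self]; ring
    _ = ∫ t, (f t + f (-t)) / 2 := by rw [integral_div, integral_add hf hf.comp_neg]
    _ = ∫ t : ℝ, t * ψ t / (z ^ 2 - t ^ 2) := by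
      simp_rw [hpair, mul_div_cancel_left₀ _ (two_ne_zero' ℂ)]

lemma integral_abs_Icc {R : ℝ} (hR : 0 ≤ R) : ∫ t in Set.Icc (-R) R, |t| = R ^ 2 := by
  rw [integral_Icc_eq_integral_Ioc, ← intervalIntegral.integral_of_le (by linarith),
    ← intervalIntegral.integral_add_adjacent_intervals (b := 0)
      (continuous_abs.intervalIntegrable _ _) (continuous_abs.intervalIntegrable _ _),
    intervalIntegral.integral_congr (f := fun t => |t|) (g := fun t => -t)
      fun t ht => abs_of_nonpos ?_,
    intervalIntegral.integral_congr (f := fun t => |t|) (g := fun t => t)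
      fun t ht => abs_of_nonneg ?_,
    intervalIntegral.integral_neg, integral_id, integral_id]
  · ring
  · exact (Set.uIcc_of_le hR ▸ ht).1
  · exact (Set.uIcc_of_le (neg_nonpos.2 hR) ▸ ht).2

lemma sub_sq_le_norm_sq_sub_sq (z : ℂ) (t : ℝ) : ‖z‖ ^ 2 - t ^ 2 ≤ ‖z ^ 2 - (t : ℂ) ^ 2‖ := by
  have h := norm_sub_norm_le (z ^ 2) ((t : ℂ) ^ 2)
  rwa [norm_pow, norm_pow, norm_real, Real.norm_eq_abs, sq_abs] at h

theorem norm_integral_mul_div_sq_sub_sq_le {ψ : ℝ → ℝ} {M R : ℝ} (hM : ∀ t, |ψ t| ≤ M)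
    (hsupp : Function.support ψ ⊆ Set.Icc (-R) R) (hR : 0 ≤ R) {z : ℂ} (hRz : R < ‖z‖) :
    ‖∫ t : ℝ, t * ψ t / (z ^ 2 - t ^ 2)‖ ≤ M * R ^ 2 / (‖z‖ ^ 2 - R ^ 2) := by
  have hD : 0 < ‖z‖ ^ 2 - R ^ 2 := by nlinarith
  set c := M / (‖z‖ ^ 2 - R ^ 2)
  have hbound (t : ℝ) :
      ‖(t : ℂ) * ψ t / (z ^ 2 - t ^ 2)‖ ≤ (Set.Icc (-R) R).indicator (fun t => c * |t|) t := by
    by_cases ht : t ∈ Set.Icc (-R) R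
    · have ht2 : t ^ 2 ≤ R ^ 2 := sq_le_sq' ht.1 ht.2
      rw [Set.indicator_of_mem ht, norm_div, norm_mul, norm_real, norm_real, Real.norm_eq_abs,
        Real.norm_eq_abs, div_le_iff₀ (hD.trans_le (by linarith [sub_sq_le_norm_sq_sub_sq z t]))]
      calc |t| * |ψ t| ≤ |t| * M := by gcongr; exact hM t
        _ = c * |t| * (‖z‖ ^ 2 - R ^ 2) := by simp only [c]; field_simp
        _ ≤ c * |t| * ‖z ^ 2 - (t : ℂ) ^ 2‖ := by
          have hc : 0 ≤ c := div_nonneg ((abs_nonneg _).trans (hM t)) hD.le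
          gcongr
          linarith [sub_sq_le_norm_sq_sub_sq z t]
    · rw [Set.indicator_of_notMem ht, Function.notMem_support.1 fun h => ht (hsupp h)]
      simp
  calc ‖∫ t : ℝ, t * ψ t / (z ^ 2 - t ^ 2)‖
      ≤ ∫ t, (Set.Icc (-R) R).indicator (fun t => c * |t|) t :=
        norm_integral_le_of_norm_le
          ((continuous_const.mul continuous_abs).integrableOn_Icc.integrable_indicator
            measurableSet_Icc) (ae_of_all _ hbound)
    _ = M * R ^ 2 / (‖z‖ ^ 2 - R ^ 2) := by
      rw [integral_indicator measurableSet_Icc, integral_const_mul, integral_abs_Icc hR]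
      ring

/-- The decay estimate `|(φ + iHφ)(z)| ≤ 4/|z|²` for `z ∈ ℍ`, `|z| ≥ 3`. -/
theorem stmt_10 (φ : ℝ → ℝ) (hφ : IsPhi φ) :
    ∀ z : ℂ, 0 < z.im → 3 ≤ ‖z‖ → ‖UHG φ z‖ ≤ 4 / ‖z‖ ^ 2 := by
  intro z hz hz3
  have hbound := norm_integral_mul_div_sq_sub_sq_le hφ.abs_le_one hφ.support_subset zero_le_two
    (z := z) (by linarith)
  rw [norm_UHG, integral_div_sub_of_odd hφ.odd hφ.integrable hz.ne']
  have hz9 : 9 ≤ ‖z‖ ^ 2 := by nlinarith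
  have hD : 0 < ‖z‖ ^ 2 - 2 ^ 2 := by linarith
  calc π⁻¹ * ‖∫ t : ℝ, t * φ t / (z ^ 2 - t ^ 2)‖ ≤ π⁻¹ * (1 * 2 ^ 2 / (‖z‖ ^ 2 - 2 ^ 2)) :=
        mul_le_mul_of_nonneg_left hbound (by positivity)
    _ ≤ 4 / ‖z‖ ^ 2 := by
      rw [← div_eq_inv_mul, div_div, div_le_div_iff₀ (mul_pos hD pi_pos) (by positivity)]
      nlinarith [Real.pi_gt_three]
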